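/- Under the weak annihilating conditions, if u and v are nonempty subsets of {1,...,N} with v strictly contained in u, and y_u, y_v are square-integrable component functions satisfying the weak annihilating conditions with respect to the marginal densities, then E[y_u(X_u) y_v(X_v)] = 0. -/

import Mathlib

/-! Pick `i ∈ u \ v` and integrate first in the coordinate `x_i` (Fubini, after splitting
`ℝ^u ≃ ℝ × ℝ^(u \ {i})`). The factor `y_v` does not depend on `x_i`, so it comes out of the
inner integral, and what remains is the annihilating integral of `y_u f_u` in `x_i`, which is
zero. -/

open MeasureTheory Function Set

namespace MeasurableEquiv

variable {ι : Type*} [DecidableEq ι]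

@[simps!]
def piSplitAt (i : ι) (X : ι → Type*) [∀ j, MeasurableSpace (X j)] :
    (∀ j, X j) ≃ᵐ X i × ∀ j : {j // j ≠ i}, X j where
  toEquiv := Equiv.piSplitAt i X
  measurable_toFun :=
    (measurable_pi_apply i).prodMk (measurable_pi_lambda _ fun j => measurable_pi_apply (j : ι))
  measurable_invFun := measurable_pi_lambda _ fun j => by
    simp only [Equiv.piSplitAt_symm_apply]
    split_ifs with h
    · subst h
      exact measurable_fst
    · exact (measurable_pi_apply _).comp measurable_snd

variable {X : ι → Type*} [∀ j, MeasurableSpace (X j)]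

theorem update_piSplitAt_symm (i : ι) (t t' : X i) (w : ∀ j : {j // j ≠ i}, X j) :
    update ((piSplitAt i X).symm (t, w)) i t' = (piSplitAt i X).symm (t', w) := by
  rw [eq_comm, symm_apply_eq]
  ext j
  · simp
  · simp [j.2]

theorem piSplitAt_symm_preimage_univ_pi (i : ι) (s : ∀ j, Set (X j)) :
    (piSplitAt i X).symm ⁻¹' univ.pi s =
      s i ×ˢ univ.pi fun j : {j // j ≠ i} => s j := by
  ext ⟨t, w⟩
  simp only [mem_preimage, mem_pi, mem_univ, forall_const, mem_prod]
  constructor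
  · intro h
    refine ⟨by simpa using h i, fun j => by simpa [j.2] using h j⟩
  · rintro ⟨ht, hw⟩ j
    by_cases hj : j = i
    · subst hj; simpa using ht
    · simpa [hj] using hw ⟨j, hj⟩

end MeasurableEquiv

open MeasurableEquiv

variable {ι : Type*} [Fintype ι] [DecidableEq ι] {X : ι → Type*} [∀ j, MeasurableSpace (X j)]

theorem measurePreserving_piSplitAt (μ : ∀ j, Measure (X j)) [∀ j, SigmaFinite (μ j)] (i : ι) :
    MeasurePreserving (piSplitAt i X) (Measure.pi μ)
      ((μ i).prod (Measure.pi fun j : {j // j ≠ i} => μ j)) := by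
  refine MeasurePreserving.symm _
    ⟨(piSplitAt i X).symm.measurable, (Measure.pi_eq fun s _ => ?_).symm⟩
  rw [MeasurableEquiv.map_apply, piSplitAt_symm_preimage_univ_pi, Measure.prod_prod, Measure.pi_pi,
    Fintype.prod_eq_mul_prod_subtype_ne _ i]

theorem integral_eq_zero_of_forall_integral_update_eq_zero {E : Type*} [NormedAddCommGroup E]
    [NormedSpace ℝ E] {μ : ∀ j, Measure (X j)} [∀ j, SigmaFinite (μ j)] {g : (∀ j, X j) → E}
    (hg : Integrable g (Measure.pi μ)) (i : ι) (h : ∀ z, ∫ t, g (update z i t) ∂μ i = 0) :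
    ∫ z, g z ∂Measure.pi μ = 0 := by
  have he := (measurePreserving_piSplitAt μ i).symm
  have hg' := (he.integrable_comp_emb (piSplitAt i X).symm.measurableEmbedding).2 hg
  rw [← he.integral_comp', integral_prod_symm (fun p => g ((piSplitAt i X).symm p)) hg']
  have hinner (w : ∀ j : {j // j ≠ i}, X j) : ∫ t, g ((piSplitAt i X).symm (t, w)) ∂μ i = 0 := by
    rcases isEmpty_or_nonempty (X i) with hX | ⟨⟨t⟩⟩
    · exact integral_of_isEmpty
    · simpa only [update_piSplitAt_symm] using h ((piSplitAt i X).symm (t, w))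
  simp only [hinner, integral_zero]

theorem stmt_7_general (N : ℕ)
    (u v : Finset (Fin N)) (hvu : v ⊂ u)
    (yu fu : (↥u → ℝ) → ℝ) (yv : (↥v → ℝ) → ℝ)
    (hannihilate_u : ∀ (i : Fin N) (hi : i ∈ u) (z : ↥u → ℝ),
      ∫ t : ℝ, yu (Function.update z ⟨i, hi⟩ t) * fu (Function.update z ⟨i, hi⟩ t) = 0)
    (hint : Integrable (fun z : ↥u → ℝ =>
      yu z * yv (fun i => z ⟨(i : Fin N), hvu.subset i.2⟩) * fu z)) :
    ∫ z : ↥u → ℝ, yu z * yv (fun i => z ⟨(i : Fin N), hvu.subset i.2⟩) * fu z = 0 := by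
  obtain ⟨i, hiu, hiv⟩ := Finset.exists_of_ssubset hvu
  refine integral_eq_zero_of_forall_integral_update_eq_zero hint ⟨i, hiu⟩ fun z => ?_
  have hrestrict (t : ℝ) : (fun j : ↥v => update z ⟨i, hiu⟩ t ⟨j, hvu.subset j.2⟩) =
      fun j : ↥v => z ⟨j, hvu.subset j.2⟩ := by
    funext j
    refine update_of_ne (fun hji => hiv ?_) _ _
    exact Subtype.mk.inj hji ▸ j.2
  calc _ = yv (fun j => z ⟨j, hvu.subset j.2⟩) *
        ∫ t, yu (update z ⟨i, hiu⟩ t) * fu (update z ⟨i, hiu⟩ t) := by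
        rw [← integral_const_mul]
        congr 1 with t
        rw [hrestrict]
        ring
    _ = 0 := by rw [hannihilate_u, mul_zero]

/-- Hierarchical orthogonality of generalized ADD component functions: if `v ⊊ u` and the
square-integrable component functions `y_u`, `y_v` satisfy the weak annihilating
conditions with respect to the marginal densities `fu`, `fv`, then
`E[y_u(X_u) y_v(X_v)] = 0`. -/
theorem stmt_7 (N : ℕ) (f : (Fin N → ℝ) → ℝ)
    (hf_nonneg : ∀ x, 0 ≤ f x) (hf_prob : ∫ x, f x = 1)
    (u v : Finset (Fin N)) (hu : u.Nonempty) (hv : v.Nonempty) (hvu : v ⊂ u)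
    (yu fu : (↥u → ℝ) → ℝ) (yv fv : (↥v → ℝ) → ℝ)
    (hmargu : ∀ z : ↥u → ℝ, fu z =
      ∫ w : (↥uᶜ → ℝ), f (fun i =>
        if h : i ∈ u then z ⟨i, h⟩ else w ⟨i, Finset.mem_compl.mpr h⟩))
    (hmargv : ∀ z : ↥v → ℝ, fv z =
      ∫ w : (↥vᶜ → ℝ), f (fun i =>
        if h : i ∈ v then z ⟨i, h⟩ else w ⟨i, Finset.mem_compl.mpr h⟩))
    (hL2u : Integrable (fun z => (yu z) ^ 2 * fu z))
    (hL2v : Integrable (fun z => (yv z) ^ 2 * fv z))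
    (hannihilate_u : ∀ (i : Fin N) (hi : i ∈ u) (z : ↥u → ℝ),
      ∫ t : ℝ, yu (Function.update z ⟨i, hi⟩ t) * fu (Function.update z ⟨i, hi⟩ t) = 0)
    (hannihilate_v : ∀ (i : Fin N) (hi : i ∈ v) (z : ↥v → ℝ),
      ∫ t : ℝ, yv (Function.update z ⟨i, hi⟩ t) * fv (Function.update z ⟨i, hi⟩ t) = 0)
    (hint : Integrable (fun z : ↥u → ℝ =>
      yu z * yv (fun i => z ⟨(i : Fin N), hvu.subset i.2⟩) * fu z)) :
    ∫ z : ↥u → ℝ, yu z * yv (fun i => z ⟨(i : Fin N), hvu.subset i.2⟩) * fu z = 0 :=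
  stmt_7_general N u v hvu yu fu yv hannihilate_u hint
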